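/- arXiv:2605.21098 — 6 statements merged into one kernel-verified Lean document; each statement's English description precedes it below -/
import Mathlib

section
/- For every rational number a/b ∈ (0,1) with a, b positive integers and a < b, there exists n ∈ ℕ such that R^n(a/b) ∈ {0, 1}, where R is the Romik map. In other words, the orbit of every rational in [0,1] under R eventually hits a fixed point 0 or 1. -/
noncomputable def romik (x : ℝ) : ℝ :=
  if x < 1/3 then x / (1 - 2*x) else if x < 1/2 then 1/x - 2 else 2 - 1/x

/-!
Each branch of the Romik map is a fractional linear map with integer coefficients, and on a
fraction `a / b` with `0 < a < b` it returns a fraction `c / d` with `0 ≤ c ≤ d < b`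
(`d = b - 2a` on the first branch, `d = a` on the other two). The denominators strictly decrease,
so the orbit must reach numerator `0` or numerator = denominator, i.e. the point `0` or `1`.
-/

section RomikBranches

variable {x : ℝ}

theorem romik_of_lt_one_third (hx : x < 1 / 3) : romik x = x / (1 - 2 * x) := by
  rw [romik, if_pos hx]

theorem romik_of_one_third_le_of_lt_half (h₁ : 1 / 3 ≤ x) (h₂ : x < 1 / 2) :
    romik x = 1 / x - 2 := by
  rw [romik, if_neg h₁.not_gt, if_pos h₂]

theorem romik_of_half_le (hx : 1 / 2 ≤ x) : romik x = 2 - 1 / x := by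
  rw [romik, if_neg (by linarith), if_neg hx.not_gt]

end RomikBranches

theorem exists_romik_natCast_div_eq {a b : ℕ} (ha : 0 < a) (hab : a < b) :
    ∃ c d : ℕ, c ≤ d ∧ d < b ∧ romik ((a : ℝ) / b) = c / d := by
  have haR : (0 : ℝ) < a := by exact_mod_cast ha
  rcases lt_or_ge (2 * a) b with h2 | h2
  · obtain ⟨d, rfl⟩ : ∃ d, b = 2 * a + d := ⟨b - 2 * a, by omega⟩
    have hdR : (0 : ℝ) < d := by exact_mod_cast (by omega : 0 < d)
    rcases lt_or_ge a d with h3 | h3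
    · have h3R : (a : ℝ) < d := by exact_mod_cast h3
      refine ⟨a, d, h3.le, by omega, ?_⟩
      have hx : (a : ℝ) / ↑(2 * a + d) < 1 / 3 := by
        push_cast; rw [div_lt_div_iff₀ (by positivity) (by norm_num)]; linarith
      rw [romik_of_lt_one_third hx]
      push_cast
      field_simp [hdR.ne']
      ring
    · have h3R : (d : ℝ) ≤ a := by exact_mod_cast h3
      refine ⟨d, a, h3, hab, ?_⟩
      have h₁ : 1 / 3 ≤ (a : ℝ) / ↑(2 * a + d) := by
        push_cast; rw [div_le_div_iff₀ (by norm_num) (by positivity)]; linarith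
      have h₂ : (a : ℝ) / ↑(2 * a + d) < 1 / 2 := by
        push_cast; rw [div_lt_div_iff₀ (by positivity) (by norm_num)]; linarith
      rw [romik_of_one_third_le_of_lt_half h₁ h₂]
      push_cast
      field_simp
      ring
  · obtain ⟨c, hc⟩ : ∃ c, 2 * a = b + c := ⟨2 * a - b, by omega⟩
    refine ⟨c, a, by omega, hab, ?_⟩
    have hcR : (2 * a : ℝ) = b + c := by exact_mod_cast hc
    have hbR : (0 : ℝ) < b := by exact_mod_cast (ha.trans hab)
    have hx : 1 / 2 ≤ (a : ℝ) / b := by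
      rw [div_le_div_iff₀ (by norm_num) hbR]
      have h2R : (b : ℝ) ≤ 2 * a := by exact_mod_cast h2
      linarith
    rw [romik_of_half_le hx]
    field_simp
    linarith

theorem exists_iterate_romik_natCast_div_mem {a b : ℕ} (hab : a ≤ b) :
    ∃ n : ℕ, romik^[n] ((a : ℝ) / b) ∈ ({0, 1} : Set ℝ) := by
  induction b using Nat.strong_induction_on generalizing a with
  | _ b ih =>
  rcases Nat.eq_zero_or_pos a with rfl | ha
  · exact ⟨0, by simp⟩
  rcases hab.eq_or_lt with rfl | hab
  · exact ⟨0, by simp [ha.ne']⟩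
  obtain ⟨c, d, hcd, hdb, h⟩ := exists_romik_natCast_div_eq ha hab
  obtain ⟨n, hn⟩ := ih d hdb hcd
  exact ⟨n + 1, by rwa [Function.iterate_succ_apply, h]⟩

theorem romik_rational_orbit_finite_general (a b : ℕ) (hab : a < b) :
    ∃ n : ℕ, romik^[n] ((a : ℝ)/(b : ℝ)) ∈ ({0, 1} : Set ℝ) :=
  exists_iterate_romik_natCast_div_mem hab.le

theorem romik_rational_orbit_finite (a b : ℕ) (ha : 0 < a) (hab : a < b) :
    ∃ n : ℕ, romik^[n] ((a : ℝ)/(b : ℝ)) ∈ ({0, 1} : Set ℝ) :=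
  romik_rational_orbit_finite_general a b hab
end

section
/- If a/b ∈ (0, 1/3] is a rational in lowest terms with a, b positive integers, then R(a/b) = a/(b-2a), and this image is a rational in [0,1] whose denominator (in lowest terms) is strictly smaller than b. -/
theorem romik_rational_left_branch (a b : ℕ) (ha : 0 < a) (hb : 0 < b)
    (hcop : Nat.Coprime a b) (hx : (a : ℝ)/(b : ℝ) ∈ Set.Ioc 0 (1/3)) :
    romik ((a : ℝ)/(b : ℝ)) = (a : ℝ)/((b : ℝ) - 2*(a : ℝ)) ∧
    ((a : ℚ)/((b : ℚ) - 2*(a : ℚ)) ∈ Set.Icc (0 : ℚ) 1) ∧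
    ((a : ℚ)/((b : ℚ) - 2*(a : ℚ))).den < b := by
  obtain ⟨hx0, hx1⟩ := hx
  have hbR : (0:ℝ) < (b:ℝ) := by exact_mod_cast hb
  have haR : (0:ℝ) < (a:ℝ) := by exact_mod_cast ha
  have h3ab : 3 * a ≤ b := by
    have h1 : (3*a:ℝ) ≤ (b:ℝ) := by
      have := (div_le_div_iff₀ hbR (by norm_num : (0:ℝ) < 3)).mp hx1
      linarith
    exact_mod_cast h1
  have hac : a ≤ b - 2*a := by omega
  have hc0 : 0 < b - 2*a := by omega
  set c := b - 2*a with hc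
  have hcast : ((c:ℚ)) = (b:ℚ) - 2*(a:ℚ) := by
    push_cast [hc, Nat.cast_sub (by omega : 2*a ≤ b)]; ring
  have hcastR : ((c:ℝ)) = (b:ℝ) - 2*(a:ℝ) := by
    push_cast [hc, Nat.cast_sub (by omega : 2*a ≤ b)]; ring
  have hcR : (0:ℝ) < (c:ℝ) := by exact_mod_cast hc0
  refine ⟨?_, ?_, ?_⟩
  · rw [romik, ← hcastR]
    by_cases h : (a:ℝ)/(b:ℝ) < 1/3
    · rw [if_pos h]
      have h2 : (1 : ℝ) - 2 * ((a:ℝ)/(b:ℝ)) = (c:ℝ)/(b:ℝ) := by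
        rw [hcastR]; field_simp
      rw [h2]
      field_simp
    · rw [if_neg h]
      -- a/b = 1/3, so b = 3a, coprime forces a = 1, b = 3
      have heq : (a:ℝ)/(b:ℝ) = 1/3 := le_antisymm hx1 (not_lt.mp h)
      have hb3a : (b:ℝ) = 3 * (a:ℝ) := by
        field_simp at heq; linarith
      have hb3a' : b = 3 * a := by exact_mod_cast hb3a
      have ha1 : a = 1 := hcop.eq_one_of_dvd ⟨3, by omega⟩
      have hb' : b = 3 := by omega
      subst ha1; subst hb'
      norm_num
  · rw [← hcast]
    have hcQ : (0:ℚ) < (c:ℚ) := by exact_mod_cast hc0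
    constructor
    · positivity
    · rw [div_le_one hcQ]; exact_mod_cast hac
  · rw [← hcast]
    have heq2 : (a:ℚ)/(c:ℚ) = Rat.divInt (a:ℤ) (c:ℤ) := by
      rw [Rat.divInt_eq_div]; push_cast; ring
    have hdvd : (((a:ℚ)/(c:ℚ)).den : ℤ) ∣ (c : ℤ) := by
      rw [heq2]; exact Rat.den_dvd _ _
    have hle : ((a:ℚ)/(c:ℚ)).den ≤ c := Nat.le_of_dvd hc0 (by exact_mod_cast hdvd)
    omega
end

section
/- Let x ∈ (0,1) have regular continued fraction expansion x = [0; a₁, a₂, a₃, …]. If a₁ > 2, then R(x) = [0; a₁-2, a₂, a₃, …], where R is the Romik map. -/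
/-! On `(0, 1/3)` the Romik map satisfies `R(x)⁻¹ = x⁻¹ - 2` and stays in `(0, 1)`. The partial
denominators of `v ∈ (0, 1)` are `⌊v⁻¹⌋` followed by those computed from `fract v⁻¹`, so
subtracting the integer `2` from `x⁻¹` lowers `a₁` by two and leaves every later partial
denominator unchanged. -/

open Int Set

namespace GenContFract

variable {K : Type*} [DivisionRing K] [LinearOrder K] [FloorRing K]

theorem IntFractPair.stream_one_eq_of_fract_eq {u v : K} (h : fract u = fract v) :
    IntFractPair.stream u 1 = IntFractPair.stream v 1 := by
  simp [IntFractPair.stream, IntFractPair.of, h]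

theorem of_partDens_get?_zero {v : K} (h : fract v ≠ 0) :
    (GenContFract.of v).partDens.get? 0 = some (⌊(fract v)⁻¹⌋ : K) :=
  partDen_eq_s_b (of_s_head h)

variable [IsStrictOrderedRing K]

theorem of_s_eq_of_fract_eq {u v : K} (h : fract u = fract v) :
    (GenContFract.of u).s = (GenContFract.of v).s := by
  refine Stream'.Seq.ext fun n => ?_
  cases n with
  | zero => rw [of_s_head_aux, of_s_head_aux, IntFractPair.stream_one_eq_of_fract_eq h]
  | succ n => rw [of_s_succ, of_s_succ, h]

theorem of_partDens_get?_succ_eq_of_fract_inv_fract_eq {u v : K}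
    (h : fract (fract u)⁻¹ = fract (fract v)⁻¹) (n : ℕ) :
    (GenContFract.of u).partDens.get? (n + 1) = (GenContFract.of v).partDens.get? (n + 1) := by
  simp only [partDens, Stream'.Seq.map_get?, of_s_succ, of_s_eq_of_fract_eq h]

end GenContFract

section Romik

variable {x : ℝ}

theorem inv_romik_of_lt_one_third (hx0 : 0 < x) (hx : x < 1/3) : (romik x)⁻¹ = x⁻¹ - 2 := by
  have : 1 - 2 * x ≠ 0 := by linarith
  rw [romik, if_pos hx]
  field_simp

theorem romik_mem_Ioo_of_lt_one_third (hx0 : 0 < x) (hx : x < 1/3) : romik x ∈ Ioo 0 1 := by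
  rw [romik, if_pos hx]
  have hden : 0 < 1 - 2 * x := by linarith
  exact ⟨div_pos hx0 hden, (div_lt_one hden).mpr (by linarith)⟩

end Romik

open GenContFract

/-- If `x ∈ (0,1)` has RCF expansion `[0; a₁, a₂, …]` with `a₁ > 2`, then
`R(x) = [0; a₁ - 2, a₂, a₃, …]`. -/
theorem romik_rcf_first_branch (x : ℝ) (hx : x ∈ Set.Ioo (0 : ℝ) 1)
    (hirr : Irrational x) (a : ℕ → ℕ)
    (ha : ∀ n : ℕ, (GenContFract.of x).partDens.get? n = some ((a (n + 1) : ℝ)))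
    (h1 : 2 < a 1) :
    ∀ n : ℕ, (GenContFract.of (romik x)).partDens.get? n =
      some (if n = 0 then ((a 1 : ℝ) - 2) else ((a (n + 1) : ℝ))) := by
  obtain ⟨hx0, hx1⟩ := hx
  have hfx : fract x = x := fract_eq_self.mpr ⟨hx0.le, hx1⟩
  have hfloor : ⌊x⁻¹⌋ = (a 1 : ℤ) := by
    have h := ha 0
    rw [of_partDens_get?_zero (by rw [hfx]; exact hx0.ne'), hfx] at h
    exact_mod_cast Option.some_injective _ h
  have hx3 : x < 1/3 := by
    have h3 : (3 : ℝ) ≤ x⁻¹ :=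
      calc (3 : ℝ) ≤ ⌊x⁻¹⌋ := by rw [hfloor]; exact_mod_cast h1
        _ ≤ x⁻¹ := floor_le _
    have h3' : (3 : ℝ) < x⁻¹ := h3.lt_of_ne (by simpa using (hirr.inv.ne_nat 3).symm)
    rwa [lt_inv_comm₀ (by norm_num) hx0, ← one_div] at h3'
  obtain ⟨hy0, hy1⟩ := romik_mem_Ioo_of_lt_one_third hx0 hx3
  have hfy : fract (romik x) = romik x := fract_eq_self.mpr ⟨hy0.le, hy1⟩
  have hinv := inv_romik_of_lt_one_third hx0 hx3
  rintro (_ | n)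
  · rw [of_partDens_get?_zero (by rw [hfy]; exact hy0.ne'), hfy, hinv, floor_sub_ofNat, hfloor]
    simp
  · rw [of_partDens_get?_succ_eq_of_fract_inv_fract_eq (v := x), ha]
    · simp
    · rw [hfy, hfx, hinv, fract_sub_ofNat]
end

section
/- Let x ∈ (0,1) be irrational with regular continued fraction expansion x = [0; 1, a₂, a₃, a₄, …]. If a₂ = 1, then R(x) = [0; a₃+1, a₄, …]; if a₂ ≥ 2, then R(x) = [0; 1, a₂-1, a₃, a₄, …], where R is the Romik map. -/
/-!
Write `x = 1/(1 + y)` with `y = [0; a₂, a₃, …]`. Since `x > 1/2`, the Romik map acts as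
`R(x) = 2 - 1/x = 1 - y`, and the expansion of `1 - y` is read off from two identities:
if `a₂ = 1`, then `y = 1/(1 + 1/u)` with `u = [a₃; a₄, …]` and `1 - y = 1/(1 + u)`;
if `a₂ ≥ 2`, then `y = 1/u` with `u = [a₂; a₃, …] > 2` and `1 - y = 1/(1 + 1/(u - 1))`.
-/

open Int Set Stream' GenContFract

theorem Stream'.Seq.eq_and_get?_eq_of_forall_get?_cons {α : Type*} {b : α} {s : Seq α}
    {f : ℕ → α} (h : ∀ n, (Seq.cons b s).get? n = some (f n)) :
    b = f 0 ∧ ∀ n, s.get? n = some (f (n + 1)) :=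
  ⟨Option.some.inj (by simpa using h 0), fun n => by simpa using h (n + 1)⟩

theorem GenContFract.partDens_of_eq_cons {K : Type*} [DivisionRing K] [LinearOrder K]
    [IsStrictOrderedRing K] [FloorRing K] {v : K} (h : fract v ≠ 0) :
    (GenContFract.of v).partDens =
      Seq.cons (⌊(fract v)⁻¹⌋ : K) (GenContFract.of (fract v)⁻¹).partDens := by
  rw [partDens, Seq.head_eq_some (of_s_head h), of_s_tail, Seq.map_cons]
  rfl

section LinearOrderedField

variable {K : Type*} [Field K] [LinearOrder K] [IsStrictOrderedRing K]

theorem inv_intCast_add_mem_Ioo {k : ℤ} (hk : 1 ≤ k) {w : K} (hw : 0 < w) :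
    ((k : K) + w)⁻¹ ∈ Ioo 0 1 := by
  have : (1 : K) ≤ k := mod_cast hk
  exact ⟨by positivity, inv_lt_one_of_one_lt₀ (by linarith)⟩

theorem one_sub_inv_one_add_inv {u : K} (hu : 0 < u) : 1 - (1 + u⁻¹)⁻¹ = (u + 1)⁻¹ := by
  field_simp
  ring

theorem one_sub_inv_eq_inv_one_add_inv_sub_one {u : K} (hu : 1 < u) :
    1 - u⁻¹ = (1 + (u - 1)⁻¹)⁻¹ := by
  have hu₁ : u - 1 ≠ 0 := by linarith
  rw [show 1 + (u - 1)⁻¹ = u / (u - 1) by field_simp; ring, inv_div]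
  field_simp

theorem GenContFract.partDens_of_inv_intCast_add [FloorRing K] {k : ℤ} (hk : 1 ≤ k) {w : K}
    (hw : w ∈ Ioo 0 1) :
    (GenContFract.of ((k : K) + w)⁻¹).partDens =
      Seq.cons (k : K) (GenContFract.of w).partDens := by
  have hfract : fract ((k : K) + w)⁻¹ = ((k : K) + w)⁻¹ :=
    fract_eq_self.2 (Ioo_subset_Ico_self (inv_intCast_add_mem_Ioo hk hw.1))
  have hfloor : ⌊(k : K) + w⌋ = k := by
    rw [floor_intCast_add, floor_eq_zero_iff.2 (Ioo_subset_Ico_self hw), add_zero]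
  have hw' : fract w = w := fract_eq_self.2 (Ioo_subset_Ico_self hw)
  rw [partDens_of_eq_cons (by rw [hfract]; exact (inv_intCast_add_mem_Ioo hk hw.1).1.ne'),
    hfract, inv_inv, hfloor, partDens_of_eq_cons (by rw [fract_intCast_add, hw']; exact hw.1.ne'),
    fract_intCast_add, ← partDens_of_eq_cons (by rw [hw']; exact hw.1.ne')]

theorem GenContFract.partDens_of_one_sub_inv_one_add_inv [FloorRing K] {j : ℤ} (hj : 1 ≤ j)
    {t : K} (ht : t ∈ Ioo 0 1) :
    (GenContFract.of (1 - (1 + ((j : K) + t)⁻¹)⁻¹)).partDens =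
      Seq.cons ((j + 1 : ℤ) : K) (GenContFract.of t).partDens := by
  have hj' : (1 : K) ≤ j := mod_cast hj
  rw [one_sub_inv_one_add_inv (by linarith [ht.1]),
    show (j : K) + t + 1 = ((j + 1 : ℤ) : K) + t by push_cast; ring,
    partDens_of_inv_intCast_add (by omega) ht]

theorem GenContFract.partDens_of_one_sub_inv_intCast_add [FloorRing K] {m : ℤ} (hm : 2 ≤ m)
    {z : K} (hz : z ∈ Ioo 0 1) :
    (GenContFract.of (1 - ((m : K) + z)⁻¹)).partDens =
      Seq.cons 1 (Seq.cons ((m - 1 : ℤ) : K) (GenContFract.of z).partDens) := by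
  have hm' : (2 : K) ≤ m := mod_cast hm
  rw [one_sub_inv_eq_inv_one_add_inv_sub_one (by linarith [hz.1]),
    show (m : K) + z - 1 = ((m - 1 : ℤ) : K) + z by push_cast; ring, ← Int.cast_one (R := K),
    partDens_of_inv_intCast_add le_rfl (inv_intCast_add_mem_Ioo (by omega) hz.1),
    partDens_of_inv_intCast_add (by omega) hz]

end LinearOrderedField

theorem Irrational.exists_eq_inv_intCast_add_of_partDens {v : ℝ} (h : Irrational v)
    (hv : v ∈ Ioo 0 1) {f : ℕ → ℝ}
    (hf : ∀ n, (GenContFract.of v).partDens.get? n = some (f n)) :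
    ∃ k : ℤ, 1 ≤ k ∧ (k : ℝ) = f 0 ∧
      ∃ w ∈ Ioo 0 1, Irrational w ∧ v = ((k : ℝ) + w)⁻¹ ∧
        ∀ n, (GenContFract.of w).partDens.get? n = some (f (n + 1)) := by
  have hk : 1 ≤ ⌊v⁻¹⌋ := le_floor.2 (by simpa using (one_le_inv₀ hv.1).2 hv.2.le)
  have hw_irr : Irrational (fract v⁻¹) := h.inv.sub_intCast _
  have hw : fract v⁻¹ ∈ Ioo 0 1 :=
    ⟨(fract_nonneg _).lt_of_ne' hw_irr.ne_zero, fract_lt_one _⟩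
  have hv_eq : v = ((⌊v⁻¹⌋ : ℝ) + fract v⁻¹)⁻¹ := by rw [floor_add_fract, inv_inv]
  rw [hv_eq, partDens_of_inv_intCast_add hk hw] at hf
  obtain ⟨hk_eq, hw_digits⟩ := Seq.eq_and_get?_eq_of_forall_get?_cons hf
  exact ⟨_, hk, hk_eq, _, hw, hw_irr, hv_eq, hw_digits⟩

theorem romik_inv_one_add {y : ℝ} (hy : y ∈ Ioo 0 1) : romik (1 + y)⁻¹ = 1 - y := by
  obtain ⟨hy0, hy1⟩ := hy
  have h : 1 / 2 < (1 + y)⁻¹ := by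
    rw [lt_inv_comm₀ (by norm_num) (by linarith)]; linarith
  rw [romik, if_neg (by linarith), if_neg (by linarith), one_div, inv_inv]
  ring

/-- If `x ∈ (0,1)` is irrational with RCF expansion `[0; 1, a₂, a₃, a₄, …]`, then:
if `a₂ = 1`, `R(x) = [0; a₃ + 1, a₄, …]`; if `a₂ ≥ 2`, `R(x) = [0; 1, a₂ - 1, a₃, a₄, …]`. -/
theorem romik_rcf_flip_branch (x : ℝ) (hx : x ∈ Set.Ioo (0 : ℝ) 1)
    (hirr : Irrational x) (a : ℕ → ℕ)
    (ha : ∀ n : ℕ, (GenContFract.of x).partDens.get? n = some ((a (n + 1) : ℝ)))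
    (h1 : a 1 = 1) :
    (a 2 = 1 →
      ∀ n : ℕ, (GenContFract.of (romik x)).partDens.get? n =
        some (if n = 0 then ((a 3 : ℝ) + 1) else ((a (n + 3) : ℝ)))) ∧
    (2 ≤ a 2 →
      ∀ n : ℕ, (GenContFract.of (romik x)).partDens.get? n =
        some (if n = 0 then (1 : ℝ) else if n = 1 then ((a 2 : ℝ) - 1)
          else ((a (n + 1) : ℝ)))) := by
  obtain ⟨k, -, hk_eq, y, hy, hy_irr, rfl, hy_digits⟩ :=
    hirr.exists_eq_inv_intCast_add_of_partDens hx ha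
  obtain rfl : k = 1 := by exact_mod_cast (show (k : ℝ) = 1 by simpa [h1] using hk_eq)
  obtain ⟨m, -, hm_eq, z, hz, hz_irr, rfl, hz_digits⟩ :=
    hy_irr.exists_eq_inv_intCast_add_of_partDens hy hy_digits
  rw [Int.cast_one, romik_inv_one_add hy]
  constructor
  · intro h2
    obtain rfl : m = 1 := by exact_mod_cast (show (m : ℝ) = 1 by simpa [h2] using hm_eq)
    obtain ⟨j, hj, hj_eq, t, ht, -, rfl, ht_digits⟩ :=
      hz_irr.exists_eq_inv_intCast_add_of_partDens hz hz_digits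
    rw [Int.cast_one, partDens_of_one_sub_inv_one_add_inv hj ht]
    rintro (_ | n)
    · simp [hj_eq]
    · simpa using ht_digits n
  · intro h2
    have hm2 : 2 ≤ m := by exact_mod_cast (show (2 : ℝ) ≤ m by rw [hm_eq]; exact_mod_cast h2)
    rw [partDens_of_one_sub_inv_intCast_add hm2 hz]
    rintro (_ | _ | n)
    · simp
    · simp [hm_eq]
    · simpa using hz_digits n
end

section
/- If x ∈ [0,1] is a quadratic irrational (irrational root of a quadratic polynomial with integer coefficients), then the orbit (R^n(x))_{n≥0} of x under the Romik map R is eventually periodic: there exist integers 0 ≤ r < s with R^r(x) = R^s(x). -/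
open Set Filter Function

theorem mapsTo_romik_Icc : MapsTo romik (Icc 0 1) (Icc 0 1) := by
  rintro y ⟨hy₀, hy₁⟩
  unfold romik
  split_ifs
  · have hpos : 0 < 1 - 2 * y := by linarith
    exact ⟨div_nonneg hy₀ hpos.le, (div_le_one hpos).2 (by linarith)⟩
  · have : 2 < 1 / y := by rw [lt_one_div (by norm_num) (by linarith)]; linarith
    have : 1 / y ≤ 3 := by rw [div_le_iff₀ (by linarith)]; linarith
    constructor <;> linarith
  · have : 1 ≤ 1 / y := by rw [le_one_div (by norm_num) (by linarith)]; linarith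
    have : 1 / y ≤ 2 := by rw [div_le_iff₀ (by linarith)]; linarith
    constructor <;> linarith

theorem mapsTo_romik_irrational : MapsTo romik {y | Irrational y} {y | Irrational y} := by
  intro y (hy : Irrational y)
  have hinv_sub : Irrational (1 / y - 2) := by simpa using hy.inv.sub_natCast 2
  unfold romik
  split_ifs
  · convert hinv_sub.inv using 1
    have := hy.ne_zero
    field_simp
  · exact hinv_sub
  · simpa using hy.inv.natCast_sub 2

theorem inv_one_sub_romik {y : ℝ} (hy : 1 / 2 ≤ y) (hy₁ : y ≠ 1) :
    (1 - romik y)⁻¹ = (1 - y)⁻¹ - 1 := by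
  have : y ≠ 0 := by rintro rfl; norm_num at hy
  have : 1 - y ≠ 0 := sub_ne_zero.2 hy₁.symm
  have hsub : 1 - (2 - 1 / y) = (1 - y) / y := by field_simp; ring
  rw [romik, if_neg (by linarith), if_neg (by linarith), hsub, inv_div]
  field_simp
  ring

theorem frequently_romik_iterate_lt_half {x : ℝ} (hx : x ∈ Icc 0 1) (hirr : Irrational x) :
    ∃ᶠ n in atTop, romik^[n] x < 1 / 2 := by
  refine frequently_atTop.2 fun m => ?_
  by_contra! hge
  have hlt_one (n : ℕ) : romik^[n] x < 1 :=
    lt_of_le_of_ne (mapsTo_romik_Icc.iterate n hx).2 (mapsTo_romik_irrational.iterate n hirr).ne_one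
  have hdrop (i : ℕ) : (1 - romik^[m + i] x)⁻¹ = (1 - romik^[m] x)⁻¹ - i := by
    induction i with
    | zero => simp
    | succ i ih =>
      rw [← add_assoc, iterate_succ_apply', inv_one_sub_romik (hge _ (by omega)) (hlt_one _).ne, ih]
      push_cast
      ring
  obtain ⟨i, hi⟩ := exists_nat_gt (1 - romik^[m] x)⁻¹
  have : 0 < (1 - romik^[m + i] x)⁻¹ := inv_pos.2 (sub_pos.2 (hlt_one _))
  linarith [hdrop i]

/-- The branch of `romik` selected by `y`, applied to `t`; thus `romik y = romikBranch y y`. -/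
noncomputable def romikBranch (y t : ℝ) : ℝ :=
  if y < 1/3 then t / (1 - 2*t) else if y < 1/2 then 1/t - 2 else 2 - 1/t

theorem one_div_lt_one_of_notMem_Icc {w : ℝ} (hw : w ∉ Icc 0 1) : 1 / w < 1 := by
  simp only [mem_Icc, not_and_or, not_le] at hw
  rcases hw with hw | hw
  · linarith [one_div_neg.2 hw]
  · exact (div_lt_one (by linarith)).2 hw

theorem romikBranch_neg_of_lt_half {y w : ℝ} (hy : y < 1 / 2) (hw : w ∉ Icc 0 1) :
    romikBranch y w < 0 := by
  have := one_div_lt_one_of_notMem_Icc hw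
  rw [romikBranch]
  split_ifs
  · simp only [mem_Icc, not_and_or, not_le] at hw
    rcases hw with hw | hw
    · exact div_neg_of_neg_of_pos hw (by linarith)
    · exact div_neg_of_pos_of_neg (by linarith) (by linarith)
  · linarith

theorem romikBranch_notMem_Icc {y w : ℝ} (hw : w ∉ Icc 0 1) : romikBranch y w ∉ Icc 0 1 := by
  by_cases hy : y < 1 / 2
  · exact fun h => (romikBranch_neg_of_lt_half hy hw).not_ge h.1
  have := one_div_lt_one_of_notMem_Icc hw
  rw [romikBranch, if_neg (by linarith), if_neg hy]
  exact fun h => by linarith [h.2]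

theorem left_ne_zero_of_not_isSquare_discrim {a b c : ℤ} (h : ¬IsSquare (discrim a b c)) :
    a ≠ 0 := by
  rintro rfl
  exact h ⟨b, by rw [discrim]; ring⟩

theorem right_ne_zero_of_not_isSquare_discrim {a b c : ℤ} (h : ¬IsSquare (discrim a b c)) :
    c ≠ 0 := by
  rintro rfl
  exact h ⟨b, by rw [discrim]; ring⟩

theorem not_isSquare_discrim_of_irrational {a b c : ℤ} {x : ℝ} (ha : a ≠ 0)
    (hx : (a : ℝ) * x ^ 2 + b * x + c = 0) (hirr : Irrational x) : ¬IsSquare (discrim a b c) := by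
  rintro ⟨s, hs⟩
  rw [discrim] at hs
  have hs' : discrim (a : ℝ) b c = s * s := by rw [discrim]; exact_mod_cast hs
  rcases (quadratic_eq_zero_iff (Int.cast_ne_zero.2 ha) hs' x).1 (by rw [← hx]; ring) with h | h
  · exact hirr ⟨(-b + s) / (2 * a), by rw [h]; push_cast; rfl⟩
  · exact hirr ⟨(-b - s) / (2 * a), by rw [h]; push_cast; rfl⟩

theorem abs_le_of_mul_neg_of_discrim_eq {a b c D : ℤ} (hac : a * c < 0)
    (hD : discrim a b c = D) : |a| ≤ D ∧ |b| ≤ D ∧ |c| ≤ D := by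
  rw [discrim] at hD
  have hb : |b| ≤ b ^ 2 := by simpa using Int.natAbs_le_self_sq b
  have habs : |a| * |c| = -(a * c) := by rw [← abs_mul, abs_of_neg hac]
  have ha := Int.one_le_abs (left_ne_zero_of_mul hac.ne)
  have hc := Int.one_le_abs (right_ne_zero_of_mul hac.ne)
  refine ⟨?_, by linarith, ?_⟩ <;> nlinarith

theorem finite_setOf_quadratic_eq_zero {a b c : ℝ} (ha : a ≠ 0) :
    {y | a * y ^ 2 + b * y + c = 0}.Finite := by
  open Polynomial in
  have hp : C a * X ^ 2 + C b * X + C c ≠ 0 := fun h0 => by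
    simpa [h0] using natDegree_quadratic (b := b) (c := c) ha
  convert Polynomial.finite_setOfPred_isRoot hp using 2
  simp

theorem abs_lt_abs_of_cast_eq_mul {a a' : ℤ} {t : ℝ} (ha : a ≠ 0) (h : (a' : ℝ) = a * t)
    (ht : |t| < 1) : |a'| < |a| := by
  have : |(a' : ℝ)| < |(a : ℝ)| := by
    rw [h, abs_mul]
    exact mul_lt_of_lt_one_right (abs_pos.2 (Int.cast_ne_zero.2 ha)) ht
  exact_mod_cast this

/-- `a X² + b X + c = a (X - y) (X - w)`. -/
structure IsRootPair (a b c : ℤ) (y w : ℝ) : Prop where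
  ne_zero : a ≠ 0
  b_eq : (b : ℝ) = -a * (y + w)
  c_eq : (c : ℝ) = a * y * w

def IsConjugatePair (D : ℤ) (y w : ℝ) : Prop :=
  ∃ a b c : ℤ, discrim a b c = D ∧ IsRootPair a b c y w

namespace IsRootPair

variable {a b c : ℤ} {y w : ℝ}

theorem of_root (ha : a ≠ 0) (hy : (a : ℝ) * y ^ 2 + b * y + c = 0) :
    IsRootPair a b c y (-b / a - y) := by
  have : (a : ℝ) ≠ 0 := Int.cast_ne_zero.2 ha
  refine ⟨ha, by field_simp; ring, ?_⟩
  field_simp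
  linear_combination hy

theorem quadratic_eq_zero (h : IsRootPair a b c y w) : (a : ℝ) * y ^ 2 + b * y + c = 0 := by
  rw [h.b_eq, h.c_eq]
  ring

theorem neg (h : IsRootPair a b c y w) : IsRootPair a (-b) c (-y) (-w) :=
  ⟨h.ne_zero, by push_cast; rw [h.b_eq]; ring, by rw [h.c_eq]; ring⟩

theorem cast_add_two_mul_add_four_mul (h : IsRootPair a b c y w) :
    ((a + 2 * b + 4 * c : ℤ) : ℝ) = a * ((1 - 2 * y) * (1 - 2 * w)) := by
  push_cast
  rw [h.b_eq, h.c_eq]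
  ring

theorem div_one_sub_two_mul (h : IsRootPair a b c y w) (ha : a + 2 * b + 4 * c ≠ 0) :
    IsRootPair (a + 2 * b + 4 * c) (b + 4 * c) c (y / (1 - 2 * y)) (w / (1 - 2 * w)) := by
  have hlead := h.cast_add_two_mul_add_four_mul
  have hprod : (a : ℝ) * ((1 - 2 * y) * (1 - 2 * w)) ≠ 0 := hlead ▸ Int.cast_ne_zero.2 ha
  have hy : y / (1 - 2 * y) * (1 - 2 * y) = y :=
    div_mul_cancel₀ y fun h0 => hprod (by rw [h0]; ring)
  have hw : w / (1 - 2 * w) * (1 - 2 * w) = w :=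
    div_mul_cancel₀ w fun h0 => hprod (by rw [h0]; ring)
  refine ⟨ha, ?_, ?_⟩
  · rw [hlead]
    push_cast
    rw [h.b_eq, h.c_eq]
    linear_combination (a * (1 - 2 * w)) * hy + (a * (1 - 2 * y)) * hw
  · rw [hlead, h.c_eq]
    linear_combination (-a * y) * hw - a * (w / (1 - 2 * w) * (1 - 2 * w)) * hy

theorem one_div_sub_two (h : IsRootPair a b c y w) (hc : c ≠ 0) :
    IsRootPair c (b + 4 * c) (a + 2 * b + 4 * c) (1 / y - 2) (1 / w - 2) := by
  have hprod : (a : ℝ) * y * w ≠ 0 := h.c_eq ▸ Int.cast_ne_zero.2 hc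
  have : y ≠ 0 := fun h0 => hprod (by rw [h0]; ring)
  have : w ≠ 0 := fun h0 => hprod (by rw [h0]; ring)
  refine ⟨hc, ?_, ?_⟩ <;>
  · push_cast
    rw [h.b_eq, h.c_eq]
    field_simp
    ring

theorem abs_add_two_mul_add_four_mul_lt (h : IsRootPair a b c y w) (hy : y ∈ Ioo 0 1)
    (hw : w ∈ Icc 0 1) : |a + 2 * b + 4 * c| < |a| :=
  abs_lt_abs_of_cast_eq_mul h.ne_zero h.cast_add_two_mul_add_four_mul <| by
    rw [abs_mul]
    exact mul_lt_one_of_nonneg_of_lt_one_left (abs_nonneg _)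
      (abs_lt.2 ⟨by linarith [hy.2], by linarith [hy.1]⟩)
      (abs_le.2 ⟨by linarith [hw.2], by linarith [hw.1]⟩)

theorem abs_right_lt_abs_left (h : IsRootPair a b c y w) (hy : y ∈ Ioo 0 1)
    (hw : w ∈ Icc 0 1) : |c| < |a| :=
  abs_lt_abs_of_cast_eq_mul h.ne_zero (by rw [h.c_eq, mul_assoc]) <| by
    rw [abs_mul]
    exact mul_lt_one_of_nonneg_of_lt_one_left (abs_nonneg _)
      (abs_lt.2 ⟨by linarith [hy.1], hy.2⟩) (abs_le.2 ⟨by linarith [hw.1], hw.2⟩)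

theorem map_romik (h : IsRootPair a b c y w) (hD : ¬IsSquare (discrim a b c)) :
    ∃ a' b' c' : ℤ, discrim a' b' c' = discrim a b c ∧
      IsRootPair a' b' c' (romik y) (romikBranch y w) ∧
      (y ∈ Ioo 0 1 → w ∈ Icc 0 1 → |a'| < |a|) := by
  have hc := right_ne_zero_of_not_isSquare_discrim hD
  rw [romik, romikBranch]
  split_ifs
  · have hdisc : discrim (a + 2 * b + 4 * c) (b + 4 * c) c = discrim a b c := by
      simp only [discrim]; ring
    refine ⟨_, _, _, hdisc, h.div_one_sub_two_mul ?_, h.abs_add_two_mul_add_four_mul_lt⟩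
    exact left_ne_zero_of_not_isSquare_discrim (hdisc ▸ hD)
  · exact ⟨_, _, _, by simp only [discrim]; ring, h.one_div_sub_two hc, h.abs_right_lt_abs_left⟩
  · refine ⟨c, -(b + 4 * c), a + 2 * b + 4 * c, by simp only [discrim]; ring, ?_,
      h.abs_right_lt_abs_left⟩
    simpa only [neg_sub] using (h.one_div_sub_two hc).neg

theorem left_mul_right_neg (h : IsRootPair a b c y w) (hD : ¬IsSquare (discrim a b c))
    (hy : 0 ≤ y) (hw : w < 0) : a * c < 0 := by
  have : ((a * c : ℤ) : ℝ) ≤ 0 := by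
    push_cast
    rw [h.c_eq]
    calc (a : ℝ) * (a * y * w) = a ^ 2 * (y * w) := by ring
      _ ≤ 0 := mul_nonpos_of_nonneg_of_nonpos (sq_nonneg _)
        (mul_nonpos_of_nonneg_of_nonpos hy hw.le)
  exact lt_of_le_of_ne (by exact_mod_cast this) <|
    mul_ne_zero (left_ne_zero_of_not_isSquare_discrim hD) (right_ne_zero_of_not_isSquare_discrim hD)

end IsRootPair

theorem IsRootPair.exists_iterate_conjugatePair_notMem_Icc {a b c : ℤ} {y w : ℝ}
    (h : IsRootPair a b c y w) (hD : ¬IsSquare (discrim a b c)) (hy : y ∈ Icc 0 1)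
    (hirr : Irrational y) :
    ∃ n w', IsConjugatePair (discrim a b c) (romik^[n] y) w' ∧ w' ∉ Icc 0 1 := by
  by_cases hw : w ∈ Icc 0 1
  · obtain ⟨a', b', c', hdisc, h', hdrop⟩ := h.map_romik hD
    have hlt : |a'| < |a| :=
      hdrop ⟨lt_of_le_of_ne hy.1 hirr.ne_zero.symm, lt_of_le_of_ne hy.2 hirr.ne_one⟩ hw
    obtain ⟨n, w', hn, hout⟩ := h'.exists_iterate_conjugatePair_notMem_Icc (hdisc ▸ hD)
      (mapsTo_romik_Icc hy) (mapsTo_romik_irrational hirr)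
    exact ⟨n + 1, w', by rwa [iterate_succ_apply, ← hdisc], hout⟩
  · exact ⟨0, w, ⟨a, b, c, rfl, h⟩, hw⟩
termination_by a.natAbs
decreasing_by zify; simpa using hlt

namespace IsConjugatePair

variable {D : ℤ} {y w : ℝ}

theorem map_romik (h : IsConjugatePair D y w) (hD : ¬IsSquare D) :
    IsConjugatePair D (romik y) (romikBranch y w) := by
  obtain ⟨a, b, c, rfl, h⟩ := h
  obtain ⟨a', b', c', hdisc, h', -⟩ := h.map_romik hD
  exact ⟨a', b', c', hdisc, h'⟩

theorem exists_iterate_of_notMem_Icc (h : IsConjugatePair D y w) (hD : ¬IsSquare D)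
    (hw : w ∉ Icc 0 1) (n : ℕ) : ∃ w', IsConjugatePair D (romik^[n] y) w' ∧ w' ∉ Icc 0 1 := by
  induction n generalizing y w with
  | zero => exact ⟨w, h, hw⟩
  | succ n ih =>
    rw [iterate_succ_apply]
    exact ih (h.map_romik hD) (romikBranch_notMem_Icc hw)

end IsConjugatePair

theorem IsRootPair.eventually_exists_conjugatePair_notMem_Icc {a b c : ℤ} {y w : ℝ}
    (h : IsRootPair a b c y w) (hD : ¬IsSquare (discrim a b c)) (hy : y ∈ Icc 0 1)
    (hirr : Irrational y) :
    ∀ᶠ n in atTop, ∃ w', IsConjugatePair (discrim a b c) (romik^[n] y) w' ∧ w' ∉ Icc 0 1 := by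
  obtain ⟨N, w, hN, hw⟩ := h.exists_iterate_conjugatePair_notMem_Icc hD hy hirr
  refine eventually_atTop.2 ⟨N, fun n hn => ?_⟩
  obtain ⟨k, rfl⟩ := Nat.exists_eq_add_of_le' hn
  rw [iterate_add_apply]
  exact hN.exists_iterate_of_notMem_Icc hD hw k

/-- `a * c < 0` says that the two roots have negative product `c / a`. -/
def oppositeSignRoots (D : ℤ) : Set ℝ :=
  {y | ∃ a b c : ℤ, a * c < 0 ∧ discrim a b c = D ∧ (a : ℝ) * y ^ 2 + b * y + c = 0}

theorem IsConjugatePair.mem_oppositeSignRoots {D : ℤ} {y w : ℝ} (h : IsConjugatePair D y w)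
    (hD : ¬IsSquare D) (hy : 0 ≤ y) (hw : w < 0) : y ∈ oppositeSignRoots D := by
  obtain ⟨a, b, c, rfl, h⟩ := h
  exact ⟨a, b, c, h.left_mul_right_neg hD hy hw, rfl, h.quadratic_eq_zero⟩

theorem finite_oppositeSignRoots (D : ℤ) : (oppositeSignRoots D).Finite := by
  have hcoeffs : {p : ℤ × ℤ × ℤ | p.1 * p.2.2 < 0 ∧ discrim p.1 p.2.1 p.2.2 = D}.Finite :=
    ((finite_Icc (-D) D).prod ((finite_Icc (-D) D).prod (finite_Icc (-D) D))).subset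
      fun p ⟨hac, hD⟩ => by
        obtain ⟨ha, hb, hc⟩ := abs_le_of_mul_neg_of_discrim_eq hac hD
        exact ⟨abs_le.1 ha, abs_le.1 hb, abs_le.1 hc⟩
  refine (hcoeffs.biUnion fun p hp => finite_setOf_quadratic_eq_zero (b := p.2.1) (c := p.2.2)
    (Int.cast_ne_zero.2 (left_ne_zero_of_mul hp.1.ne))).subset ?_
  rintro y ⟨a, b, c, hac, hD, hy⟩
  exact mem_biUnion (x := (a, b, c)) ⟨hac, hD⟩ hy

theorem exists_lt_eq_of_frequently_mem {α : Type*} {f : ℕ → α} {s : Set α} (hs : s.Finite)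
    (h : ∃ᶠ n in atTop, f n ∈ s) : ∃ m n, m < n ∧ f m = f n := by
  obtain ⟨m, -, n, -, hmn, he⟩ :=
    (Nat.frequently_atTop_iff_infinite.1 h).exists_lt_map_eq_of_mapsTo (f := f) (fun _ hn => hn) hs
  exact ⟨m, n, hmn, he⟩

theorem romik_quadratic_irrational_eventually_periodic (x : ℝ)
    (hx : x ∈ Set.Icc (0 : ℝ) 1) (hirr : Irrational x)
    (hquad : ∃ a b c : ℤ, a ≠ 0 ∧ (a : ℝ) * x ^ 2 + (b : ℝ) * x + (c : ℝ) = 0) :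
    ∃ r s : ℕ, r < s ∧ romik^[r] x = romik^[s] x := by
  obtain ⟨a, b, c, ha, hroot⟩ := hquad
  have hD := not_isSquare_discrim_of_irrational ha hroot hirr
  have hconj :=
    (IsRootPair.of_root ha hroot).eventually_exists_conjugatePair_notMem_Icc hD hx hirr
  have hfreq : ∃ᶠ n in atTop, romik^[n] x ∈ oppositeSignRoots (discrim a b c) := by
    refine (tendsto_add_atTop_nat 1).frequently
      ((hconj.and_frequently (frequently_romik_iterate_lt_half hx hirr)).mono ?_)
    rintro n ⟨⟨w, hw, hout⟩, hlt⟩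
    rw [iterate_succ_apply']
    exact (hw.map_romik hD).mem_oppositeSignRoots hD
      (mapsTo_romik_Icc (mapsTo_romik_Icc.iterate n hx)).1 (romikBranch_neg_of_lt_half hlt hout)
  exact exists_lt_eq_of_frequently_mem (finite_oppositeSignRoots _) hfreq
end

section
/- For each fixed x ∈ (0,1), the integral over y ∈ [0,1] of 1/(x+y-2xy)² equals 1/(x(1-x)). That is, the projection of the density 1/(x+y-2xy)² on the first coordinate is the density 1/(x(1-x)) of the Romik-invariant measure. -/
open Set intervalIntegral

/-- `y / (a * (a + b * y))` vanishes at `0` and works for every `b`, including the degenerate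
`b = 0` where the usual antiderivative `-1 / (b * (a + b * y))` breaks down. -/
theorem hasDerivAt_div_mul_affine {a b y : ℝ} (ha : a ≠ 0) (hy : a + b * y ≠ 0) :
    HasDerivAt (fun y => y / (a * (a + b * y))) (1 / (a + b * y) ^ 2) y := by
  have hden : HasDerivAt (fun y => a * (a + b * y)) (a * b) y := by
    simpa using (((hasDerivAt_id y).const_mul b).const_add a).const_mul a
  refine ((hasDerivAt_id y).div hden (mul_ne_zero ha hy)).congr_deriv ?_
  field_simp
  simp

theorem integral_one_div_affine_sq {a b t : ℝ} (h : ∀ y ∈ uIcc 0 t, a + b * y ≠ 0) :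
    ∫ y in 0..t, 1 / (a + b * y) ^ 2 = t / (a * (a + b * t)) := by
  have ha : a ≠ 0 := by simpa using h 0 left_mem_uIcc
  have hcont : ContinuousOn (fun y => 1 / (a + b * y) ^ 2) (uIcc 0 t) :=
    continuousOn_const.div (by fun_prop) fun y hy => pow_ne_zero 2 (h y hy)
  rw [integral_eq_sub_of_hasDerivAt (fun y hy => hasDerivAt_div_mul_affine ha (h y hy))
    hcont.intervalIntegrable]
  simp

theorem romik_density_projection (x : ℝ) (hx : x ∈ Set.Ioo (0 : ℝ) 1) :
    ∫ y in (0 : ℝ)..1, 1 / (x + y - 2*x*y)^2 = 1 / (x * (1 - x)) := by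
  obtain ⟨hx0, hx1⟩ := hx
  have hpos : ∀ y ∈ uIcc (0 : ℝ) 1, 0 < x + (1 - 2 * x) * y := by
    intro y hy
    rw [uIcc_of_le zero_le_one] at hy
    -- `x + (1 - 2x) y = x (1 - x) + (x - y)² + y (1 - y)`
    nlinarith [mul_pos hx0 (sub_pos.2 hx1), sq_nonneg (x - y), mul_nonneg hy.1 (sub_nonneg.2 hy.2)]
  have hrw : (fun y => 1 / (x + y - 2*x*y)^2) = fun y => 1 / (x + (1 - 2 * x) * y) ^ 2 := by
    funext y; ring_nf
  rw [hrw, integral_one_div_affine_sq fun y hy => (hpos y hy).ne']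
  ring_nf
end
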